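/- arXiv:2412.10036 — 10 statements merged into one kernel-verified Lean document; each statement's English description precedes it below -/
import Mathlib

section
/- For every fixed h > 0, the function A(ε) = 2ε²h·e^{3ε²h²}·(e^{4ε²h²} − 1 − 4ε²h²) / (e^{8ε²h²} − 1 − 8ε²h²·e^{4ε²h²}), defined for ε > 0, tends to 3/(4h) as ε → 0⁺. -/
/-!
With `x = 4 ε² h²` the weight is `exp (3x/4) / (2h)` times
`x (eˣ - 1 - x) / (e²ˣ - 1 - 2x eˣ)`. Taylor expansion of `exp` gives `eˣ - 1 - x ~ x²/2`, and
`e²ˣ - 1 - 2x eˣ = 2 eˣ (sinh x - x) ~ x³/3`, so the ratio tends to `(x³/2) / (x³/3) = 3/2` and the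
weight to `3/2 · 1/(2h) = 3/(4h)`.
-/

open Filter Topology Asymptotics Real
open scoped Nat

namespace Real

theorem isEquivalent_exp_sub_one_sub_id :
    (fun x : ℝ => exp x - 1 - x) ~[𝓝 0] fun x => x ^ 2 / 2 := by
  refine IsLittleO.isEquivalent ?_
  have taylor := (exp_sub_sum_range_succ_isLittleO_pow 2).const_mul_right (c := (2⁻¹ : ℝ))
    (by norm_num)
  refine taylor.congr (fun x => ?_) (fun x => ?_)
  · simp only [Pi.sub_apply, Finset.sum_range_succ, Finset.sum_range_zero, Nat.factorial]
    push_cast; ring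
  · ring

theorem isEquivalent_sinh_sub_id :
    (fun x : ℝ => sinh x - x) ~[𝓝 0] fun x => x ^ 3 / 6 := by
  refine IsLittleO.isEquivalent ?_
  have taylor := exp_sub_sum_range_isBigO_pow 4
  have taylor_neg :
      (fun x : ℝ => exp (-x) - ∑ i ∈ Finset.range 4, (-x) ^ i / i !) =O[𝓝 0] (· ^ 4) :=
    (taylor.comp_tendsto (continuous_neg.tendsto' 0 0 neg_zero)).congr (fun _ => rfl)
      (fun x => Even.neg_pow (by decide) x)
  have := ((taylor.sub taylor_neg).const_mul_left 2⁻¹).trans_isLittleO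
    ((isLittleO_pow_pow (by norm_num : 3 < 4)).const_mul_right (c := (6⁻¹ : ℝ)) (by norm_num))
  refine this.congr (fun x => ?_) (fun x => ?_)
  · simp only [Pi.sub_apply, Finset.sum_range_succ, Finset.sum_range_zero, Nat.factorial, sinh_eq]
    push_cast; ring
  · ring

theorem isEquivalent_exp_two_mul_sub_one_sub_two_mul_mul_exp :
    (fun x : ℝ => exp (2 * x) - 1 - 2 * x * exp x) ~[𝓝 0] fun x => x ^ 3 / 3 := by
  have two_exp : (fun x : ℝ => 2 * exp x) ~[𝓝 0] fun _ => 2 :=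
    (isEquivalent_const_iff_tendsto two_ne_zero).2 <| by
      simpa using (continuous_exp.tendsto 0).const_mul 2
  refine (two_exp.mul isEquivalent_sinh_sub_id).congr_left (.of_forall fun x => ?_)
    |>.congr_right (.of_forall fun x => ?_)
  · simp only [Pi.mul_apply, sinh_eq, mul_sub, exp_neg]
    rw [two_mul x, exp_add]
    field_simp
    ring
  · simp only [Pi.mul_apply]; ring

theorem tendsto_mul_exp_sub_one_sub_div_exp_two_mul_sub_one_sub_two_mul_mul_exp :
    Tendsto (fun x : ℝ => x * (exp x - 1 - x) / (exp (2 * x) - 1 - 2 * x * exp x))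
      (𝓝[≠] 0) (𝓝 (3 / 2)) := by
  have ratio := ((IsEquivalent.refl (u := id)).mul isEquivalent_exp_sub_one_sub_id).div
    isEquivalent_exp_two_mul_sub_one_sub_two_mul_mul_exp |>.mono (nhdsWithin_le_nhds (s := {0}ᶜ))
  refine ratio.symm.tendsto_nhds (tendsto_const_nhds.congr' ?_)
  filter_upwards [self_mem_nhdsWithin] with x (hx : x ≠ 0)
  simp only [Pi.div_apply, Pi.mul_apply, id]
  field_simp

end Real

/-- In the flat limit ε → 0⁺, the fourth-order Gaussian RBF-HFD weight
`A(ε)` for function values converges to the compact FD weight `3/(4h)`. -/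
theorem gaussian_rbf_hfd4_alpha_flat_limit (h : ℝ) (hh : 0 < h) :
    Tendsto (fun ε : ℝ =>
      2 * ε ^ 2 * h * Real.exp (3 * ε ^ 2 * h ^ 2) *
        (Real.exp (4 * ε ^ 2 * h ^ 2) - 1 - 4 * ε ^ 2 * h ^ 2) /
        (Real.exp (8 * ε ^ 2 * h ^ 2) - 1 - 8 * ε ^ 2 * h ^ 2 * Real.exp (4 * ε ^ 2 * h ^ 2)))
      (𝓝[>] 0) (𝓝 (3 / (4 * h))) := by
  have x_tendsto : Tendsto (fun ε : ℝ => 4 * ε ^ 2 * h ^ 2) (𝓝[>] 0) (𝓝[≠] 0) := by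
    refine tendsto_nhdsWithin_of_tendsto_nhds_of_eventually_within _ ?_ ?_
    · exact Continuous.tendsto' (f := fun ε : ℝ => 4 * ε ^ 2 * h ^ 2) (by fun_prop) 0 0 (by simp)
        |>.mono_left nhdsWithin_le_nhds
    · filter_upwards [self_mem_nhdsWithin] with ε (hε : 0 < ε)
      exact (by positivity : 4 * ε ^ 2 * h ^ 2 ≠ 0)
  have prefactor :
      Tendsto (fun x : ℝ => exp (3 * x / 4) / (2 * h)) (𝓝[≠] 0) (𝓝 (1 / (2 * h))) :=
    (Continuous.tendsto' (f := fun x : ℝ => exp (3 * x / 4) / (2 * h)) (by fun_prop) 0 _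
      (by simp)).mono_left nhdsWithin_le_nhds
  have limit := (prefactor.mul
    tendsto_mul_exp_sub_one_sub_div_exp_two_mul_sub_one_sub_two_mul_mul_exp).comp x_tendsto
  convert limit using 2 with ε
  · simp only [Function.comp_apply]
    rw [show 3 * (4 * ε ^ 2 * h ^ 2) / 4 = 3 * ε ^ 2 * h ^ 2 by ring,
      show 2 * (4 * ε ^ 2 * h ^ 2) = 8 * ε ^ 2 * h ^ 2 by ring]
    field_simp
    ring
  · ring
end

section
/- For every fixed h > 0, the function B(ε) = e^{ε²h²}·(2ε²h²·cosh(2ε²h²) − sinh(2ε²h²)) / (4ε²h² − sinh(4ε²h²)), defined for ε > 0, tends to −1/4 as ε → 0⁺. -/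
/-!
Put `u = 2ε²h²`, which tends to `0⁺` with `ε` because `h ≠ 0`. Then
`B = exp (u / 2) · (u cosh u - sinh u) / (2u - sinh 2u)`, and both numerator and denominator
vanish to third order at `0`: three applications of L'Hôpital's rule leave
`(2 cosh u + u sinh u) / (-8 cosh 2u) → 2 / (-8) = -1/4`.
-/

open Filter Topology Real

theorem HasDerivAt.lhopital_zero_nhdsGT_of_apply_zero {f g f' g' : ℝ → ℝ} {l : Filter ℝ}
    (hf : ∀ x, HasDerivAt f (f' x) x) (hg : ∀ x, HasDerivAt g (g' x) x)
    (hf0 : f 0 = 0) (hg0 : g 0 = 0) (hg' : ∀ x > 0, g' x ≠ 0)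
    (hdiv : Tendsto (fun x => f' x / g' x) (𝓝[>] 0) l) :
    Tendsto (fun x => f x / g x) (𝓝[>] 0) l := by
  have tendsto_zero {k : ℝ → ℝ} {k' : ℝ} (hk : HasDerivAt k k' 0) (hk0 : k 0 = 0) :
      Tendsto k (𝓝[>] 0) (𝓝 0) := by
    simpa [hk0] using (hk.continuousAt.continuousWithinAt (s := Set.Ioi 0)).tendsto
  exact HasDerivAt.lhopital_zero_nhdsGT (.of_forall hf) (.of_forall hg)
    (eventually_nhdsWithin_of_forall hg') (tendsto_zero (hf 0) hf0) (tendsto_zero (hg 0) hg0)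
    hdiv

theorem tendsto_mul_cosh_sub_sinh_div_two_mul_sub_sinh_two_mul :
    Tendsto (fun u => (u * cosh u - sinh u) / (2 * u - sinh (2 * u)))
      (𝓝[>] 0) (𝓝 (-1 / 4)) := by
  have two_mul_deriv (u : ℝ) : HasDerivAt (fun u : ℝ => 2 * u) 2 u := by
    simpa using (hasDerivAt_id' u).const_mul 2
  have num₁ (u : ℝ) : HasDerivAt (fun u => u * cosh u - sinh u) (u * sinh u) u :=
    (((hasDerivAt_id' u).mul (hasDerivAt_cosh u)).sub (hasDerivAt_sinh u)).congr_deriv (by ring)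
  have num₂ (u : ℝ) : HasDerivAt (fun u => u * sinh u) (sinh u + u * cosh u) u :=
    ((hasDerivAt_id' u).mul (hasDerivAt_sinh u)).congr_deriv (by ring)
  have num₃ (u : ℝ) :
      HasDerivAt (fun u => sinh u + u * cosh u) (2 * cosh u + u * sinh u) u :=
    ((hasDerivAt_sinh u).add ((hasDerivAt_id' u).mul (hasDerivAt_cosh u))).congr_deriv
      (by ring)
  have den₁ (u : ℝ) :
      HasDerivAt (fun u => 2 * u - sinh (2 * u)) (2 - 2 * cosh (2 * u)) u :=
    ((two_mul_deriv u).sub (two_mul_deriv u).sinh).congr_deriv (by ring)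
  have den₂ (u : ℝ) :
      HasDerivAt (fun u => 2 - 2 * cosh (2 * u)) (-4 * sinh (2 * u)) u :=
    (((two_mul_deriv u).cosh.const_mul 2).const_sub 2).congr_deriv (by ring)
  have den₃ (u : ℝ) : HasDerivAt (fun u => -4 * sinh (2 * u)) (-8 * cosh (2 * u)) u :=
    ((two_mul_deriv u).sinh.const_mul (-4)).congr_deriv (by ring)
  have den₁_ne (u : ℝ) (hu : 0 < u) : 2 - 2 * cosh (2 * u) ≠ 0 := by
    have : 1 < cosh (2 * u) := one_lt_cosh.2 (by positivity)
    linarith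
  have den₂_ne (u : ℝ) (hu : 0 < u) : -4 * sinh (2 * u) ≠ 0 := by
    have : 0 < sinh (2 * u) := sinh_pos_iff.2 (by positivity)
    linarith
  have den₃_ne (u : ℝ) : -8 * cosh (2 * u) ≠ 0 := by
    have := cosh_pos (2 * u)
    linarith
  have third_ratio : Tendsto (fun u => (2 * cosh u + u * sinh u) / (-8 * cosh (2 * u)))
      (𝓝[>] 0) (𝓝 (-1 / 4)) := by
    have hcont : Continuous fun u => (2 * cosh u + u * sinh u) / (-8 * cosh (2 * u)) :=
      Continuous.div (by fun_prop) (by fun_prop) den₃_ne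
    convert (hcont.tendsto 0).mono_left nhdsWithin_le_nhds using 2
    norm_num
  refine HasDerivAt.lhopital_zero_nhdsGT_of_apply_zero num₁ den₁ (by simp) (by simp)
    den₁_ne ?_
  refine HasDerivAt.lhopital_zero_nhdsGT_of_apply_zero num₂ den₂ (by simp) (by simp)
    den₂_ne ?_
  exact HasDerivAt.lhopital_zero_nhdsGT_of_apply_zero num₃ den₃ (by simp) (by simp)
    (fun u _ => den₃_ne u) third_ratio

/-- In the flat limit ε → 0⁺, the fourth-order Gaussian RBF-HFD weight
`B(ε)` for derivative values converges to the compact FD weight `-1/4`. -/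
theorem gaussian_rbf_hfd4_beta_flat_limit (h : ℝ) (hh : 0 < h) :
    Tendsto (fun ε : ℝ =>
      Real.exp (ε ^ 2 * h ^ 2) *
        (2 * ε ^ 2 * h ^ 2 * Real.cosh (2 * ε ^ 2 * h ^ 2) - Real.sinh (2 * ε ^ 2 * h ^ 2)) /
        (4 * ε ^ 2 * h ^ 2 - Real.sinh (4 * ε ^ 2 * h ^ 2)))
      (𝓝[>] 0) (𝓝 (-1 / 4)) := by
  have hu : Tendsto (fun ε : ℝ => 2 * ε ^ 2 * h ^ 2) (𝓝[>] 0) (𝓝[>] 0) := by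
    refine tendsto_nhdsWithin_iff.2 ⟨?_, ?_⟩
    · have hcont : Continuous fun ε : ℝ => 2 * ε ^ 2 * h ^ 2 := by fun_prop
      simpa using (hcont.tendsto 0).mono_left nhdsWithin_le_nhds
    · filter_upwards [self_mem_nhdsWithin] with ε (hε : 0 < ε)
      exact Set.mem_Ioi.2 (by positivity)
  have hexp : Tendsto (fun u => exp (u / 2)) (𝓝[>] 0) (𝓝 1) := by
    simpa using ((by fun_prop : Continuous fun u : ℝ => exp (u / 2)).tendsto 0).mono_left
      nhdsWithin_le_nhds
  have hB := (hexp.mul tendsto_mul_cosh_sub_sinh_div_two_mul_sub_sinh_two_mul).comp hu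
  rw [one_mul] at hB
  refine hB.congr fun ε => ?_
  simp only [Function.comp_apply]
  ring_nf
end

section
/- Fix ε > 0 and x₀ ∈ ℝ, and let u be five times continuously differentiable on a neighborhood of x₀. For h > 0 define A(h) = 2ε²h·e^{3ε²h²}·(e^{4ε²h²} − 1 − 4ε²h²)/(e^{8ε²h²} − 1 − 8ε²h²·e^{4ε²h²}) and B(h) = e^{ε²h²}·(2ε²h²·cosh(2ε²h²) − sinh(2ε²h²))/(4ε²h² − sinh(4ε²h²)). Then, as h → 0⁺, A(h)·(u(x₀+h) − u(x₀−h)) + B(h)·(u'(x₀−h) + u'(x₀+h)) − u'(x₀) = −(h⁴/120)·(60ε⁴·u'(x₀) + 20ε²·u'''(x₀) + u⁽⁵⁾(x₀)) + o(h⁴). -/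
/-!
With `t = ε²h²`, the products `A(h)·h` and `B(h)` are functions of `t` alone: quotients whose
numerator and denominator both vanish to third order at `t = 0`. Expanding the exponentials to
fifth order gives `A(h)·h = 3/4 + t/4 - 9t²/40 + O(t³)` and `B(h) = -1/4 - t/4 - t²/40 + O(t³)`.
Writing `A(h)(u(x₀+h) - u(x₀-h)) = (A(h)·h) · (u(x₀+h) - u(x₀-h))/h` and inserting the
Taylor–Peano expansions of this central difference quotient and of `u'(x₀-h) + u'(x₀+h)`, all
terms of order below `h⁴` cancel, and the `h⁴` terms give the stated error.
-/

open Filter Topology Asymptotics Real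

theorem Real.exp_const_mul_sub_taylor_isBigO (c : ℝ) :
    (fun t => exp (c * t) - (1 + c * t + (c * t) ^ 2 / 2 + (c * t) ^ 3 / 6 + (c * t) ^ 4 / 24 +
      (c * t) ^ 5 / 120)) =O[𝓝 0] (· ^ 6) := by
  have hc : Tendsto (fun t : ℝ => c * t) (𝓝 0) (𝓝 0) := by
    simpa using (continuous_const_mul c).tendsto 0
  have := ((exp_sub_sum_range_isBigO_pow 6).comp_tendsto hc).trans
    (isBigO_refl (fun t : ℝ => (c * t) ^ 6) _ |>.trans
      ((isBigO_const_mul_self (c ^ 6) (· ^ 6) _).congr_left fun t => by ring))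
  refine this.congr_left fun t => ?_
  simp [Finset.sum_range_succ, Nat.factorial]

theorem Asymptotics.IsBigO.continuousAt_mul {a : ℝ} {f g k : ℝ → ℝ} (hf : ContinuousAt f a)
    (hg : g =O[𝓝 a] k) : (fun x => f x * g x) =O[𝓝 a] k := by
  simpa using (hf.tendsto.isBigO_one ℝ).mul hg

theorem Asymptotics.isBigO_of_isLittleO_sub_const_mul {α 𝕜 : Type*} [NormedField 𝕜]
    {l : Filter α} {f g : α → 𝕜} {c : 𝕜} (hc : c ≠ 0) (h : (fun x => f x - c * g x) =o[l] g) :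
    g =O[l] f :=
  (isBigO_self_const_mul hc g l).trans <|
    (h.trans_isBigO (isBigO_self_const_mul hc g l)).right_isBigO_add.congr_right fun x => by ring

theorem Asymptotics.isBigO_div_sub_of_isBigO_sub_mul {α 𝕜 : Type*} [NormedField 𝕜]
    {l : Filter α} {N D p g r : α → 𝕜}
    (hnum : (fun x => N x - p x * D x) =O[l] fun x => g x * r x) (hrD : r =O[l] D)
    (hr : ∀ᶠ x in l, r x ≠ 0) : (fun x => N x / D x - p x) =O[l] g := by
  obtain ⟨C₁, hC₁, hN⟩ := hnum.exists_pos
  obtain ⟨C₂, hC₂, hD⟩ := hrD.exists_pos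
  refine IsBigO.of_bound (C₁ * C₂) ?_
  filter_upwards [hN.bound, hD.bound, hr, hrD.eq_zero_imp] with x hNx hDx hrx hDr
  have hDx0 : D x ≠ 0 := fun h => hrx (hDr h)
  rw [div_sub' hDx0, norm_div, div_le_iff₀ (norm_pos_iff.mpr hDx0)]
  calc ‖N x - D x * p x‖ ≤ C₁ * (‖g x‖ * ‖r x‖) := by
        rw [mul_comm (D x)]; simpa using hNx
    _ ≤ C₁ * (‖g x‖ * (C₂ * ‖D x‖)) := by gcongr
    _ = C₁ * C₂ * ‖g x‖ * ‖D x‖ := by ring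

theorem isBigO_div_sub_of_expansions {N D p : ℝ → ℝ} {c : ℝ} {m : ℕ} (hc : c ≠ 0)
    (hnum : (fun t => N t - p t * D t) =O[𝓝 0] (· ^ (2 * m)))
    (hden : (fun t => D t - c * t ^ m) =o[𝓝 0] (· ^ m)) :
    (fun t => N t / D t - p t) =O[𝓝[≠] 0] (· ^ m) := by
  refine isBigO_div_sub_of_isBigO_sub_mul (r := (· ^ m)) ?_ ?_ ?_
  · exact (hnum.mono nhdsWithin_le_nhds).congr_right fun t => by ring
  · exact isBigO_of_isLittleO_sub_const_mul hc (hden.mono nhdsWithin_le_nhds)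
  · filter_upwards [self_mem_nhdsWithin] with t ht using pow_ne_zero m ht

/-- `A(h) · h = rbfWeightA (ε² h²)` and `B(h) = rbfWeightB (ε² h²)`. -/
noncomputable def rbfWeightA (t : ℝ) : ℝ :=
  2 * t * exp (3 * t) * (exp (4 * t) - 1 - 4 * t) / (exp (8 * t) - 1 - 8 * t * exp (4 * t))

noncomputable def rbfWeightB (t : ℝ) : ℝ :=
  exp t * (2 * t * cosh (2 * t) - sinh (2 * t)) / (4 * t - sinh (4 * t))

theorem rbfWeightA_sub_isBigO :
    (fun t => rbfWeightA t - (3 / 4 + t / 4 - 9 * t ^ 2 / 40)) =O[𝓝[≠] 0] (· ^ 3) := by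
  have e₃ := exp_const_mul_sub_taylor_isBigO 3
  have e₄ := exp_const_mul_sub_taylor_isBigO 4
  have e₈ := exp_const_mul_sub_taylor_isBigO 8
  unfold rbfWeightA
  refine isBigO_div_sub_of_expansions (c := 64 / 3) (by norm_num) ?_ ?_
  -- `t⁶` times this polynomial is `N - p D` with each `exp (c t)` replaced by its
  -- Taylor polynomial.
  · have hq := (isBigO_refl (· ^ 6) (𝓝 (0 : ℝ))).continuousAt_mul (f := fun t => 4088 / 15 +
      26738 / 75 * t + 6546 / 25 * t ^ 2 + 192 * t ^ 3 + 504 / 5 * t ^ 4 + 864 / 25 * t ^ 5)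
      (by fun_prop)
    refine (((hq.add (e₃.continuousAt_mul (f := fun t => 2 * t * (exp (4 * t) - 1 - 4 * t))
      (by fun_prop))).add (e₄.continuousAt_mul (f := fun t =>
        2 * t * (1 + 3 * t + (3 * t) ^ 2 / 2 + (3 * t) ^ 3 / 6 + (3 * t) ^ 4 / 24 +
          (3 * t) ^ 5 / 120) + 8 * t * (3 / 4 + t / 4 - 9 * t ^ 2 / 40))
      (by fun_prop))).add (e₈.continuousAt_mul (f := fun t => -(3 / 4 + t / 4 - 9 * t ^ 2 / 40))
      (by fun_prop))).congr_left fun t => by ring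
  · have h₆₄ : (· ^ 6) =O[𝓝 (0 : ℝ)] (· ^ 4) := (isLittleO_pow_pow (by norm_num)).isBigO
    have hr := (isBigO_refl (· ^ 4) (𝓝 (0 : ℝ))).continuousAt_mul
      (f := fun t => 256 / 3 + 2816 / 15 * t - 1024 / 15 * t ^ 2) (by fun_prop)
    refine (((hr.add (e₈.trans h₆₄)).sub ((e₄.trans h₆₄).continuousAt_mul (f := fun t => 8 * t)
      (by fun_prop))).congr_left fun t => by ring).trans_isLittleO
      (isLittleO_pow_pow (by norm_num))

theorem rbfWeightB_sub_isBigO :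
    (fun t => rbfWeightB t - (-1 / 4 - t / 4 - t ^ 2 / 40)) =O[𝓝[≠] 0] (· ^ 3) := by
  have e₁ := exp_const_mul_sub_taylor_isBigO 1
  have e₂ := exp_const_mul_sub_taylor_isBigO 2
  have e₂' := exp_const_mul_sub_taylor_isBigO (-2)
  have e₄ := exp_const_mul_sub_taylor_isBigO 4
  have e₄' := exp_const_mul_sub_taylor_isBigO (-4)
  simp only [one_mul, neg_mul] at e₁ e₂' e₄'
  unfold rbfWeightB
  simp only [cosh_eq, sinh_eq]
  refine isBigO_div_sub_of_expansions (c := -32 / 3) (by norm_num) ?_ ?_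
  · have hq := (isBigO_refl (· ^ 6) (𝓝 (0 : ℝ))).continuousAt_mul (f := fun t => -28 / 45 +
      97 / 225 * t + 1 / 5 * t ^ 2 + 2 / 45 * t ^ 3 + 2 / 225 * t ^ 4) (by fun_prop)
    refine (((((hq.add (e₁.continuousAt_mul
      (f := fun t => (t - 1 / 2) * exp (2 * t) + (t + 1 / 2) * exp (-(2 * t))) (by fun_prop))).add
      (e₂.continuousAt_mul (f := fun t =>
        (1 + t + t ^ 2 / 2 + t ^ 3 / 6 + t ^ 4 / 24 + t ^ 5 / 120) * (t - 1 / 2))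
        (by fun_prop))).add
      (e₂'.continuousAt_mul (f := fun t =>
        (1 + t + t ^ 2 / 2 + t ^ 3 / 6 + t ^ 4 / 24 + t ^ 5 / 120) * (t + 1 / 2))
        (by fun_prop))).add
      (e₄.continuousAt_mul (f := fun t => (-1 / 4 - t / 4 - t ^ 2 / 40) / 2) (by fun_prop))).sub
      (e₄'.continuousAt_mul (f := fun t => (-1 / 4 - t / 4 - t ^ 2 / 40) / 2)
        (by fun_prop))).congr_left fun t => by ring
  · have h₆₄ : (· ^ 6) =O[𝓝 (0 : ℝ)] (· ^ 4) := (isLittleO_pow_pow (by norm_num)).isBigO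
    have hr := (isBigO_refl (· ^ 4) (𝓝 (0 : ℝ))).continuousAt_mul
      (f := fun t => -128 / 15 * t) (by fun_prop)
    refine (((hr.sub ((e₄.trans h₆₄).const_mul_left (1 / 2))).add
      ((e₄'.trans h₆₄).const_mul_left (1 / 2))).congr_left fun t => by ring).trans_isLittleO
      (isLittleO_pow_pow (by norm_num))

open Nat in
theorem taylor_comp_add_isLittleO {f : ℝ → ℝ} {x₀ : ℝ} {n : ℕ} {s : Set ℝ} (hs : s ∈ 𝓝 x₀)
    (hf : ContDiffOn ℝ n f s) :
    (fun h => f (x₀ + h) - ∑ k ∈ Finset.range (n + 1), iteratedDeriv k f x₀ / k ! * h ^ k)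
      =o[𝓝 0] (· ^ n) := by
  obtain ⟨r, hr, hball⟩ := Metric.mem_nhds_iff.mp hs
  have hT := taylor_isLittleO (convex_ball x₀ r) (Metric.mem_ball_self hr) (hf.mono hball)
  rw [nhdsWithin_eq_nhds.mpr (Metric.ball_mem_nhds x₀ hr)] at hT
  have hshift : Tendsto (x₀ + ·) (𝓝 0) (𝓝 x₀) := by
    simpa using (continuous_const_add x₀).tendsto 0
  refine (hT.comp_tendsto hshift).congr' (Eventually.of_forall fun h => ?_)
    (Eventually.of_forall fun h => by simp)
  simp only [Function.comp_apply, taylor_within_apply, add_sub_cancel_left, smul_eq_mul]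
  congr 1
  refine Finset.sum_congr rfl fun k _ => ?_
  rw [iteratedDerivWithin_of_isOpen Metric.isOpen_ball (Metric.mem_ball_self hr)]
  ring

open Nat in
theorem taylor_comp_sub_isLittleO {f : ℝ → ℝ} {x₀ : ℝ} {n : ℕ} {s : Set ℝ} (hs : s ∈ 𝓝 x₀)
    (hf : ContDiffOn ℝ n f s) :
    (fun h => f (x₀ - h) - ∑ k ∈ Finset.range (n + 1), iteratedDeriv k f x₀ / k ! * (-h) ^ k)
      =o[𝓝 0] (· ^ n) := by
  have hneg : Tendsto (fun h : ℝ => -h) (𝓝 0) (𝓝 0) := by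
    simpa using (continuous_neg (G := ℝ)).tendsto 0
  refine ((taylor_comp_add_isLittleO hs hf).comp_tendsto hneg).trans_isBigO
    (isBigO_of_le _ fun h => by simp [norm_pow]) |>.congr_left fun h => ?_
  simp only [Function.comp_apply, sub_eq_add_neg]

theorem centralDifference_sub_isLittleO {f : ℝ → ℝ} {x₀ : ℝ} {s : Set ℝ} (hs : s ∈ 𝓝 x₀)
    (hf : ContDiffOn ℝ 5 f s) :
    (fun h => f (x₀ + h) - f (x₀ - h) - (2 * deriv f x₀ * h + iteratedDeriv 3 f x₀ * h ^ 3 / 3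
      + iteratedDeriv 5 f x₀ * h ^ 5 / 60)) =o[𝓝 0] (· ^ 5) := by
  refine ((taylor_comp_add_isLittleO hs hf).sub (taylor_comp_sub_isLittleO hs hf)).congr_left
    fun h => ?_
  simp only [Finset.sum_range_succ, Finset.sum_range_zero, Nat.factorial, iteratedDeriv_zero,
    iteratedDeriv_one]
  push_cast
  ring

theorem centralSum_sub_isLittleO {f : ℝ → ℝ} {x₀ : ℝ} {s : Set ℝ} (hs : s ∈ 𝓝 x₀)
    (hf : ContDiffOn ℝ 4 f s) :
    (fun h => f (x₀ - h) + f (x₀ + h) - (2 * f x₀ + iteratedDeriv 2 f x₀ * h ^ 2 +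
      iteratedDeriv 4 f x₀ * h ^ 4 / 12)) =o[𝓝 0] (· ^ 4) := by
  refine ((taylor_comp_sub_isLittleO hs hf).add (taylor_comp_add_isLittleO hs hf)).congr_left
    fun h => ?_
  simp only [Finset.sum_range_succ, Finset.sum_range_zero, Nat.factorial, iteratedDeriv_zero]
  push_cast
  ring

theorem centralDifference_div_sub_isLittleO {f : ℝ → ℝ} {x₀ : ℝ} {s : Set ℝ} (hs : s ∈ 𝓝 x₀)
    (hf : ContDiffOn ℝ 5 f s) :
    (fun h => (f (x₀ + h) - f (x₀ - h)) / h - (2 * deriv f x₀ +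
      iteratedDeriv 3 f x₀ * h ^ 2 / 3 + iteratedDeriv 5 f x₀ * h ^ 4 / 60))
      =o[𝓝[≠] 0] (· ^ 4) := by
  refine ((centralDifference_sub_isLittleO hs hf).mono nhdsWithin_le_nhds |>.mul_isBigO
    (isBigO_refl (·⁻¹) _)).congr' ?_ ?_ <;>
  filter_upwards [self_mem_nhdsWithin] with h (hh : h ≠ 0) <;> field_simp

theorem Asymptotics.IsBigO.comp_const_mul_sq {f : ℝ → ℝ} {c : ℝ} {n : ℕ} (hc : c ≠ 0)
    (hf : f =O[𝓝[≠] 0] (· ^ n)) : (fun h => f (c * h ^ 2)) =O[𝓝[≠] 0] (· ^ (2 * n)) := by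
  have hsq : Tendsto (fun h : ℝ => c * h ^ 2) (𝓝[≠] 0) (𝓝[≠] 0) := by
    refine tendsto_nhdsWithin_iff.mpr ⟨?_, ?_⟩
    · exact ((Continuous.tendsto (by fun_prop) 0).mono_left nhdsWithin_le_nhds).trans
        (by simp)
    · filter_upwards [self_mem_nhdsWithin] with h (hh : h ≠ 0)
      exact mul_ne_zero hc (pow_ne_zero 2 hh)
  exact (hf.comp_tendsto hsq).trans ((isBigO_const_mul_self (c ^ n) (· ^ (2 * n)) _).congr_left
    fun h => by simp only [Function.comp_apply]; ring)

theorem Asymptotics.IsLittleO.mul_sub_mul {α 𝕜 : Type*} [NormedField 𝕜] {l : Filter α}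
    {f₁ f₂ p₁ p₂ g : α → 𝕜} (h₁ : (fun x => f₁ x - p₁ x) =o[l] g)
    (h₂ : (fun x => f₂ x - p₂ x) =o[l] g) (hp₁ : p₁ =O[l] fun _ => (1 : 𝕜))
    (hp₂ : p₂ =O[l] fun _ => (1 : 𝕜)) (hg : g =O[l] fun _ => (1 : 𝕜)) :
    (fun x => f₁ x * f₂ x - p₁ x * p₂ x) =o[l] g := by
  have hf₂ : f₂ =O[l] fun _ => (1 : 𝕜) :=
    ((h₂.isBigO.trans hg).add hp₂).congr_left fun x => by ring
  exact (((h₁.mul_isBigO hf₂).congr_right fun x => mul_one _).add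
    ((hp₁.mul_isLittleO h₂).congr_right fun x => one_mul _)).congr_left fun x => by ring

/-- Leading-order local truncation error of the fourth-order Gaussian RBF-HFD
formula for the first derivative, as `h → 0⁺`. -/
theorem gaussian_rbf_hfd4_first_deriv_lte (ε x₀ : ℝ) (hε : 0 < ε) (u : ℝ → ℝ)
    (s : Set ℝ) (hs : s ∈ 𝓝 x₀) (hu : ContDiffOn ℝ 5 u s) :
    (fun h : ℝ =>
        (2 * ε ^ 2 * h * Real.exp (3 * ε ^ 2 * h ^ 2) *
            (Real.exp (4 * ε ^ 2 * h ^ 2) - 1 - 4 * ε ^ 2 * h ^ 2) /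
            (Real.exp (8 * ε ^ 2 * h ^ 2) - 1 -
              8 * ε ^ 2 * h ^ 2 * Real.exp (4 * ε ^ 2 * h ^ 2))) *
          (u (x₀ + h) - u (x₀ - h)) +
        (Real.exp (ε ^ 2 * h ^ 2) *
            (2 * ε ^ 2 * h ^ 2 * Real.cosh (2 * ε ^ 2 * h ^ 2) -
              Real.sinh (2 * ε ^ 2 * h ^ 2)) /
            (4 * ε ^ 2 * h ^ 2 - Real.sinh (4 * ε ^ 2 * h ^ 2))) *
          (deriv u (x₀ - h) + deriv u (x₀ + h)) -
        deriv u x₀ -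
        (-(h ^ 4 / 120) *
          (60 * ε ^ 4 * deriv u x₀ + 20 * ε ^ 2 * iteratedDeriv 3 u x₀ +
            iteratedDeriv 5 u x₀)))
      =o[𝓝[>] 0] fun h : ℝ => h ^ 4 := by
  have h₆₄ : (· ^ 6) =o[𝓝[≠] (0 : ℝ)] (· ^ 4) :=
    (isLittleO_pow_pow (by norm_num)).mono nhdsWithin_le_nhds
  have bounded : ∀ p : ℝ → ℝ, Continuous p → p =O[𝓝[≠] 0] fun _ => (1 : ℝ) :=
    fun p hp => ((hp.tendsto 0).mono_left nhdsWithin_le_nhds).isBigO_one ℝ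
  have hε₂ : ε ^ 2 ≠ 0 := pow_ne_zero 2 hε.ne'
  have hA := (rbfWeightA_sub_isBigO.comp_const_mul_sq hε₂).trans_isLittleO h₆₄
  have hB := (rbfWeightB_sub_isBigO.comp_const_mul_sq hε₂).trans_isLittleO h₆₄
  have hD := centralDifference_div_sub_isLittleO hs hu
  have hS := centralSum_sub_isLittleO (interior_mem_nhds.mpr hs)
    ((hu.mono interior_subset).deriv_of_isOpen isOpen_interior (m := 4) (by norm_num))
  simp only [← iteratedDeriv_succ'] at hS
  have hAD := hA.mul_sub_mul hD (bounded _ (by fun_prop)) (bounded _ (by fun_prop))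
    (bounded _ (by fun_prop))
  have hBS := hB.mul_sub_mul (hS.mono nhdsWithin_le_nhds) (bounded _ (by fun_prop))
    (bounded _ (by fun_prop)) (bounded _ (by fun_prop))
  -- The products of the expansions of `hA`, `hD`, `hB`, `hS` sum to `u' x₀ + τ₀` plus `h⁶` times
  -- this polynomial.
  have hR := ((isBigO_refl (· ^ 6) _).continuousAt_mul (f := fun h =>
    -(ε ^ 2 * iteratedDeriv 5 u x₀) / 60 - ε ^ 4 * iteratedDeriv 3 u x₀ / 10 -
      7 * ε ^ 4 * iteratedDeriv 5 u x₀ * h ^ 2 / 1200) (by fun_prop)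
    |>.mono nhdsWithin_le_nhds).trans_isLittleO h₆₄
  refine (((hAD.add hBS).add hR).mono (nhdsWithin_mono _ fun h (hh : 0 < h) => hh.ne')).congr' ?_
    .rfl
  filter_upwards [self_mem_nhdsWithin] with h (hh : 0 < h)
  simp only [rbfWeightA, rbfWeightB]
  field_simp
  ring_nf
end

section
/- Let x₀ ∈ ℝ and let u be seven times continuously differentiable on a neighborhood of x₀. Then, as h → 0⁺, (7/(9h))·(u(x₀+h) − u(x₀−h)) + (1/(36h))·(u(x₀+2h) − u(x₀−2h)) − (1/3)·(u'(x₀−h) + u'(x₀+h)) − u'(x₀) = (h⁶/1260)·u⁽⁷⁾(x₀) + o(h⁶). -/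
/-!
Expand `u (x₀ + c h)` to order seven and `u' (x₀ + c h)` to order six by Taylor's theorem with
Peano remainder, for `c = ±1, ±2`. In the scheme the Taylor polynomials cancel through order
six, leaving `h ^ 6 / 1260 * u⁽⁷⁾ x₀`; the remainders of `u` are `o(h ^ 7)` and get divided by
`h`, those of `u'` are `o(h ^ 6)`.
-/

open Filter Topology Asymptotics

open scoped Nat

section

variable {E : Type*} [NormedAddCommGroup E] [NormedSpace ℝ E]

theorem ContDiffAt.sub_taylor_isLittleO {f : ℝ → E} {x₀ : ℝ} {n : ℕ}
    (hf : ContDiffAt ℝ n f x₀) :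
    (fun x ↦ f x - ∑ k ∈ Finset.range (n + 1),
        ((k ! : ℝ)⁻¹ * (x - x₀) ^ k) • iteratedDeriv k f x₀)
      =o[𝓝 x₀] fun x ↦ (x - x₀) ^ n := by
  obtain ⟨s, hs, hfs⟩ := hf.contDiffOn le_rfl (by simp)
  obtain ⟨r, hr, hrs⟩ := Metric.mem_nhds_iff.1 hs
  have hx₀ : x₀ ∈ Metric.ball x₀ r := Metric.mem_ball_self hr
  simpa only [Metric.isOpen_ball.nhdsWithin_eq hx₀, taylor_within_apply,
    iteratedDerivWithin_of_isOpen Metric.isOpen_ball hx₀]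
    using taylor_isLittleO (convex_ball x₀ r) hx₀ (hfs.mono hrs)

theorem ContDiffAt.sub_taylor_comp_mul_isLittleO {f : ℝ → E} {x₀ : ℝ} {n : ℕ}
    (hf : ContDiffAt ℝ n f x₀) (c : ℝ) :
    (fun h ↦ f (x₀ + c * h) - ∑ k ∈ Finset.range (n + 1),
        ((k ! : ℝ)⁻¹ * (c * h) ^ k) • iteratedDeriv k f x₀)
      =o[𝓝 0] fun h ↦ h ^ n := by
  have hlin : Tendsto (fun h : ℝ ↦ x₀ + c * h) (𝓝 0) (𝓝 x₀) :=
    (continuous_const.add (continuous_const.mul continuous_id)).tendsto' 0 x₀ (by simp)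
  have h := hf.sub_taylor_isLittleO.comp_tendsto hlin
  simp only [Function.comp_def, add_sub_cancel_left] at h
  refine h.trans_isBigO ?_
  simpa only [mul_pow] using (isBigO_refl (fun h : ℝ ↦ h ^ n) _).const_mul_left (c ^ n)

end

theorem Asymptotics.IsLittleO.inv_mul_pow_succ {l : Filter ℝ} {f : ℝ → ℝ} {n : ℕ}
    (hf : f =o[l] fun h ↦ h ^ (n + 1)) : (fun h ↦ h⁻¹ * f h) =o[l] fun h ↦ h ^ n := by
  refine ((isBigO_refl (fun h : ℝ ↦ h⁻¹) l).mul_isLittleO hf).trans_isBigO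
    (isBigO_of_le _ fun h ↦ ?_)
  rcases eq_or_ne h 0 with rfl | hh
  · cases n <;> simp
  · rw [pow_succ, ← mul_assoc, mul_comm h⁻¹, mul_assoc, inv_mul_cancel₀ hh, mul_one]

/-- Leading-order truncation error of the sixth-order compact FD scheme for
the first derivative. -/
theorem compact_fd6_first_deriv_lte (x₀ : ℝ) (u : ℝ → ℝ)
    (s : Set ℝ) (hs : s ∈ 𝓝 x₀) (hu : ContDiffOn ℝ 7 u s) :
    (fun h : ℝ =>
        7 / (9 * h) * (u (x₀ + h) - u (x₀ - h)) +
        1 / (36 * h) * (u (x₀ + 2 * h) - u (x₀ - 2 * h)) -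
        1 / 3 * (deriv u (x₀ - h) + deriv u (x₀ + h)) -
        deriv u x₀ -
        h ^ 6 / 1260 * iteratedDeriv 7 u x₀)
      =o[𝓝[>] 0] fun h : ℝ => h ^ 6 := by
  have hu₇ : ContDiffAt ℝ (6 + 1 : ℕ) u x₀ := hu.contDiffAt hs
  have hu'₆ : ContDiffAt ℝ (6 : ℕ) (deriv u) x₀ := hu₇.derivWithin (by norm_num)
  have hR := hu₇.sub_taylor_comp_mul_isLittleO
  have hR' := hu'₆.sub_taylor_comp_mul_isLittleO
  have hremainder := ((((hR 1).sub (hR (-1))).inv_mul_pow_succ.const_mul_left (7 / 9)).add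
    (((hR 2).sub (hR (-2))).inv_mul_pow_succ.const_mul_left (1 / 36))).sub
    (((hR' (-1)).add (hR' 1)).const_mul_left (1 / 3))
  refine (hremainder.mono nhdsWithin_le_nhds).congr' ?_ EventuallyEq.rfl
  filter_upwards [self_mem_nhdsWithin] with h (hh : 0 < h)
  simp only [Finset.sum_range_succ, Finset.sum_range_zero, smul_eq_mul, ← iteratedDeriv_succ',
    iteratedDeriv_zero, iteratedDeriv_one, one_mul, neg_mul, ← sub_eq_add_neg]
  norm_num [Nat.factorial]
  field_simp
  ring
end

section
/- Let x₀ ∈ ℝ and let u be nine times continuously differentiable on a neighborhood of x₀. Then, as h → 0⁺, (20/(27h))·(u(x₀+h) − u(x₀−h)) + (25/(216h))·(u(x₀+2h) − u(x₀−2h)) − (4/9)·(u'(x₀−h) + u'(x₀+h)) − (1/36)·(u'(x₀−2h) + u'(x₀+2h)) − u'(x₀) = −(h⁸/22680)·u⁽⁹⁾(x₀) + o(h⁸). -/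
/-!
Expand `u` to order 9 and `u'` to order 8 about `x₀` with Peano remainders; the remainders are
`o(h⁹)` and `o(h⁸)`, and the scheme divides the former by `h` only once. Applied to the two
Taylor polynomials the scheme is exact up to a single term: the moment conditions of the
coefficients `20/27, 25/216, 4/9, 1/36` cancel every power of `h` below the eighth, and what
survives is `u'(x₀) - h⁸ u⁽⁹⁾(x₀) / 22680`.
-/

open Filter Topology Asymptotics Set

section Taylor

variable {E : Type*} [NormedAddCommGroup E] [NormedSpace ℝ E]

theorem taylorWithinEval_of_isOpen {f : ℝ → E} {s : Set ℝ} (hs : IsOpen s) {x₀ : ℝ}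
    (hx₀ : x₀ ∈ s) (n : ℕ) (x : ℝ) :
    taylorWithinEval f n s x₀ x = taylorWithinEval f n univ x₀ x := by
  simp only [taylor_within_apply, iteratedDerivWithin_univ,
    iteratedDerivWithin_of_isOpen hs hx₀]

theorem taylor_isLittleO_of_mem_nhds {f : ℝ → E} {x₀ : ℝ} {n : ℕ} {s : Set ℝ}
    (hs : s ∈ 𝓝 x₀) (hf : ContDiffOn ℝ n f s) :
    (fun x ↦ f x - taylorWithinEval f n univ x₀ x) =o[𝓝 x₀] fun x ↦ (x - x₀) ^ n := by
  obtain ⟨ε, hε, hball⟩ := Metric.mem_nhds_iff.mp hs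
  have hx₀ : x₀ ∈ Metric.ball x₀ ε := Metric.mem_ball_self hε
  have h := taylor_isLittleO (convex_ball x₀ ε) hx₀ (hf.mono hball)
  rw [Metric.isOpen_ball.nhdsWithin_eq hx₀] at h
  simpa only [taylorWithinEval_of_isOpen Metric.isOpen_ball hx₀] using h

theorem taylor_isLittleO_comp_mul {f : ℝ → E} {x₀ : ℝ} {n : ℕ} {s : Set ℝ}
    (hs : s ∈ 𝓝 x₀) (hf : ContDiffOn ℝ n f s) (c : ℝ) :
    (fun h ↦ f (x₀ + c * h) - taylorWithinEval f n univ x₀ (x₀ + c * h)) =o[𝓝 0]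
      fun h ↦ h ^ n := by
  have hc : Tendsto (fun h : ℝ ↦ x₀ + c * h) (𝓝 0) (𝓝 x₀) := by
    simpa using ((continuous_const.mul continuous_id).const_add x₀).tendsto (0 : ℝ)
  refine ((taylor_isLittleO_of_mem_nhds hs hf).comp_tendsto hc).trans_isBigO ?_
  simpa [Function.comp_def, mul_pow] using isBigO_const_mul_self (c ^ n) (fun h : ℝ ↦ h ^ n) _

end Taylor

theorem Asymptotics.IsLittleO.div_self_pow {𝕜 : Type*} [NormedField 𝕜] {l : Filter 𝕜}
    {g : 𝕜 → 𝕜} {n : ℕ} (hg : g =o[l] fun x ↦ x ^ (n + 1)) :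
    (fun x ↦ g x / x) =o[l] fun x ↦ x ^ n := by
  refine IsLittleO.of_bound fun c hc ↦ (hg.bound hc).mono fun x hx ↦ ?_
  rcases eq_or_ne x 0 with rfl | hx0
  · simpa using mul_nonneg hc.le (norm_nonneg ((0 : 𝕜) ^ n))
  · rw [norm_div, div_le_iff₀ (norm_pos_iff.mpr hx0)]
    simpa [pow_succ, mul_assoc] using hx

theorem compact_fd8_taylor_identity (u : ℝ → ℝ) (x₀ h : ℝ) (hh : h ≠ 0) :
    20 / (27 * h) * (taylorWithinEval u 9 univ x₀ (x₀ + h) -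
        taylorWithinEval u 9 univ x₀ (x₀ - h)) +
      25 / (216 * h) * (taylorWithinEval u 9 univ x₀ (x₀ + 2 * h) -
        taylorWithinEval u 9 univ x₀ (x₀ - 2 * h)) -
      4 / 9 * (taylorWithinEval (deriv u) 8 univ x₀ (x₀ - h) +
        taylorWithinEval (deriv u) 8 univ x₀ (x₀ + h)) -
      1 / 36 * (taylorWithinEval (deriv u) 8 univ x₀ (x₀ - 2 * h) +
        taylorWithinEval (deriv u) 8 univ x₀ (x₀ + 2 * h)) =
    deriv u x₀ - h ^ 8 / 22680 * iteratedDeriv 9 u x₀ := by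
  simp only [taylor_within_apply, iteratedDerivWithin_univ, Finset.sum_range_succ,
    Finset.sum_range_zero, ← iteratedDeriv_succ', smul_eq_mul]
  rw [← iteratedDeriv_one]
  norm_num [Nat.factorial]
  field_simp
  ring

/-- Leading-order truncation error of the eighth-order compact FD scheme for
the first derivative. -/
theorem compact_fd8_first_deriv_lte (x₀ : ℝ) (u : ℝ → ℝ)
    (s : Set ℝ) (hs : s ∈ 𝓝 x₀) (hu : ContDiffOn ℝ 9 u s) :
    (fun h : ℝ =>
        20 / (27 * h) * (u (x₀ + h) - u (x₀ - h)) +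
        25 / (216 * h) * (u (x₀ + 2 * h) - u (x₀ - 2 * h)) -
        4 / 9 * (deriv u (x₀ - h) + deriv u (x₀ + h)) -
        1 / 36 * (deriv u (x₀ - 2 * h) + deriv u (x₀ + 2 * h)) -
        deriv u x₀ -
        (-(h ^ 8 / 22680) * iteratedDeriv 9 u x₀))
      =o[𝓝[>] 0] fun h : ℝ => h ^ 8 := by
  have hu9 : ContDiffOn ℝ (9 : ℕ) u s := hu
  have hu' : ContDiffOn ℝ (8 : ℕ) (deriv u) (interior s) :=
    (hu9.mono interior_subset).deriv_of_isOpen isOpen_interior le_rfl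
  have hR (c : ℝ) := (taylor_isLittleO_comp_mul hs hu9 c).div_self_pow
  have hS (c : ℝ) := taylor_isLittleO_comp_mul (interior_mem_nhds.mpr hs) hu' c
  have hsum := (((hR 1).sub (hR (-1))).const_mul_left (20 / 27)).add
    (((hR 2).sub (hR (-2))).const_mul_left (25 / 216)) |>.sub
    (((hS (-1)).add (hS 1)).const_mul_left (4 / 9)) |>.sub
    (((hS (-2)).add (hS 2)).const_mul_left (1 / 36))
  refine (hsum.mono nhdsWithin_le_nhds).congr' ?_ EventuallyEq.rfl
  filter_upwards [self_mem_nhdsWithin] with h (hh : 0 < h)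
  simp only [one_mul, neg_mul, ← sub_eq_add_neg]
  linear_combination (-1 : ℝ) * compact_fd8_taylor_identity u x₀ h hh.ne'
end

section
/- Let x₀ ∈ ℝ and let u be eleven times continuously differentiable on a neighborhood of x₀. Then, as h → 0⁺, (17/(24h))·(u(x₀+h) − u(x₀−h)) + (101/(600h))·(u(x₀+2h) − u(x₀−2h)) + (1/(600h))·(u(x₀+3h) − u(x₀−3h)) − (1/2)·(u'(x₀−h) + u'(x₀+h)) − (1/20)·(u'(x₀−2h) + u'(x₀+2h)) − u'(x₀) = (h¹⁰/277200)·u⁽¹¹⁾(x₀) + o(h¹⁰). -/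
/-!
Expand `u` to order 11 and `u'` to order 10 about `x₀` (Taylor with Peano remainder). The scheme
is linear in the pair `(u, u')`; on the Taylor polynomials it is exact up to degree 10, and on
`t ^ 11` it leaves `144 * h ^ 10 = 11! * h ^ 10 / 277200`, the leading term. The remainders are
`o(t ^ 11)` and `o(t ^ 10)`, so after the division by `h` in the stencil weights they contribute
`o(h ^ 10)`.
-/

open Filter Topology Asymptotics Finset
open scoped Nat

theorem taylor_isLittleO_of_contDiffAt {E : Type*} [NormedAddCommGroup E] [NormedSpace ℝ E]
    {f : ℝ → E} {x₀ : ℝ} {n : ℕ} (hf : ContDiffAt ℝ n f x₀) :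
    (fun t ↦ f (x₀ + t) - ∑ k ∈ range (n + 1), ((k ! : ℝ)⁻¹ * t ^ k) • iteratedDeriv k f x₀)
      =o[𝓝 0] fun t ↦ t ^ n := by
  obtain ⟨s, hs, hfs⟩ := hf.contDiffOn le_rfl (by simp)
  obtain ⟨ε, hε, hball⟩ := Metric.mem_nhds_iff.1 hs
  have hT := taylor_isLittleO (convex_ball x₀ ε) (Metric.mem_ball_self hε) (hfs.mono hball)
  rw [Metric.isOpen_ball.nhdsWithin_eq (Metric.mem_ball_self hε)] at hT
  have hshift : Tendsto (fun t : ℝ ↦ x₀ + t) (𝓝 0) (𝓝 x₀) := by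
    simpa using (continuous_const_add x₀).tendsto 0
  refine (hT.comp_tendsto hshift).congr (fun t ↦ ?_) (fun t ↦ by simp)
  simp only [Function.comp_apply, taylor_within_apply, add_sub_cancel_left,
    iteratedDerivWithin_of_isOpen Metric.isOpen_ball (Metric.mem_ball_self hε)]

theorem Asymptotics.IsLittleO.comp_const_mul_pow {R : ℝ → ℝ} {n : ℕ}
    (hR : R =o[𝓝 0] fun t ↦ t ^ n) (a : ℝ) :
    (fun h ↦ R (a * h)) =o[𝓝 0] fun h ↦ h ^ n := by
  have hscale : Tendsto (fun h : ℝ ↦ a * h) (𝓝 0) (𝓝 0) := by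
    simpa using (continuous_const_mul a).tendsto 0
  refine (hR.comp_tendsto hscale).trans_isBigO ?_
  simpa only [Function.comp_def, mul_pow] using isBigO_const_mul_self (a ^ n) (· ^ n) (𝓝 (0 : ℝ))

theorem Asymptotics.IsLittleO.div_id_pow {R : ℝ → ℝ} {n : ℕ}
    (hR : R =o[𝓝 0] fun t ↦ t ^ (n + 1)) :
    (fun h ↦ R h / h) =o[𝓝 0] fun h ↦ h ^ n := by
  have hdiv : (fun h : ℝ ↦ h ^ (n + 1) * h⁻¹) =O[𝓝 0] fun h ↦ h ^ n := by
    refine isBigO_of_le _ fun h ↦ ?_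
    rcases eq_or_ne h 0 with rfl | hh
    · simp
    · rw [pow_succ, mul_inv_cancel_right₀ hh]
  simpa only [div_eq_mul_inv] using
    (hR.mul_isBigO (isBigO_refl (fun h : ℝ ↦ h⁻¹) _)).trans_isBigO hdiv

/-- The error of the scheme, for `f t = u (x₀ + t)` and `g t = u' (x₀ + t)`. -/
noncomputable def compactFD10Residual (f g : ℝ → ℝ) (h : ℝ) : ℝ :=
  17 / (24 * h) * (f h - f (-h)) + 101 / (600 * h) * (f (2 * h) - f (-2 * h)) +
    1 / (600 * h) * (f (3 * h) - f (-3 * h)) - 1 / 2 * (g (-h) + g h) -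
    1 / 20 * (g (-2 * h) + g (2 * h)) - g 0

theorem compactFD10Residual_sub (f f' g g' : ℝ → ℝ) (h : ℝ) :
    compactFD10Residual (fun t ↦ f t - f' t) (fun t ↦ g t - g' t) h =
      compactFD10Residual f g h - compactFD10Residual f' g' h := by
  simp only [compactFD10Residual]
  ring

theorem compactFD10Residual_taylor (c : ℕ → ℝ) {h : ℝ} (hh : h ≠ 0) :
    compactFD10Residual (fun t ↦ ∑ k ∈ range 12, ((k ! : ℝ)⁻¹ * t ^ k) * c k)
      (fun t ↦ ∑ k ∈ range 11, ((k ! : ℝ)⁻¹ * t ^ k) * c (k + 1)) h = h ^ 10 / 277200 * c 11 := by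
  simp only [compactFD10Residual, sum_range_succ, sum_range_zero, Nat.factorial]
  field_simp
  ring

theorem compactFD10Residual_isLittleO {R S : ℝ → ℝ} (hR : R =o[𝓝 0] fun t ↦ t ^ 11)
    (hS : S =o[𝓝 0] fun t ↦ t ^ 10) :
    compactFD10Residual R S =o[𝓝 0] fun h ↦ h ^ 10 := by
  have hR' (a : ℝ) := (hR.comp_const_mul_pow a).div_id_pow
  have hS' (a : ℝ) := hS.comp_const_mul_pow a
  have hsum := (((((((hR' 1).sub (hR' (-1))).const_mul_left (17 / 24)).add
    (((hR' 2).sub (hR' (-2))).const_mul_left (101 / 600))).add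
    (((hR' 3).sub (hR' (-3))).const_mul_left (1 / 600))).sub
    (((hS' (-1)).add (hS' 1)).const_mul_left (1 / 2))).sub
    (((hS' (-2)).add (hS' 2)).const_mul_left (1 / 20))).sub (hS' 0)
  refine hsum.congr_left fun h ↦ ?_
  simp only [compactFD10Residual, one_mul, neg_one_mul, zero_mul]
  ring

/-- Leading-order truncation error of the tenth-order compact FD scheme for
the first derivative. -/
theorem compact_fd10_first_deriv_lte (x₀ : ℝ) (u : ℝ → ℝ)
    (s : Set ℝ) (hs : s ∈ 𝓝 x₀) (hu : ContDiffOn ℝ 11 u s) :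
    (fun h : ℝ =>
        17 / (24 * h) * (u (x₀ + h) - u (x₀ - h)) +
        101 / (600 * h) * (u (x₀ + 2 * h) - u (x₀ - 2 * h)) +
        1 / (600 * h) * (u (x₀ + 3 * h) - u (x₀ - 3 * h)) -
        1 / 2 * (deriv u (x₀ - h) + deriv u (x₀ + h)) -
        1 / 20 * (deriv u (x₀ - 2 * h) + deriv u (x₀ + 2 * h)) -
        deriv u x₀ -
        h ^ 10 / 277200 * iteratedDeriv 11 u x₀)
      =o[𝓝[>] 0] fun h : ℝ => h ^ 10 := by
  have hu₀ : ContDiffAt ℝ 11 u x₀ := hu.contDiffAt hs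
  set P : ℝ → ℝ := fun t ↦ ∑ k ∈ range 12, ((k ! : ℝ)⁻¹ * t ^ k) * iteratedDeriv k u x₀
  set Q : ℝ → ℝ := fun t ↦ ∑ k ∈ range 11, ((k ! : ℝ)⁻¹ * t ^ k) * iteratedDeriv (k + 1) u x₀
  have hP : (fun t ↦ u (x₀ + t) - P t) =o[𝓝 0] fun t ↦ t ^ 11 := by
    simpa only [smul_eq_mul] using taylor_isLittleO_of_contDiffAt hu₀
  have hQ : (fun t ↦ deriv u (x₀ + t) - Q t) =o[𝓝 0] fun t ↦ t ^ 10 := by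
    simpa only [smul_eq_mul, ← iteratedDeriv_succ'] using
      taylor_isLittleO_of_contDiffAt (hu₀.derivWithin (m := 10) (by norm_num))
  refine ((compactFD10Residual_isLittleO hP hQ).mono nhdsWithin_le_nhds).congr' ?_ .rfl
  filter_upwards [self_mem_nhdsWithin] with h (hh : 0 < h)
  rw [compactFD10Residual_sub, compactFD10Residual_taylor _ hh.ne']
  simp only [compactFD10Residual, add_zero, neg_mul, ← sub_eq_add_neg]
end

section
/- For every real polynomial p of degree at most 10, every x₀ ∈ ℝ and every h > 0, p'(x₀) = (17/(24h))·(p(x₀+h) − p(x₀−h)) + (101/(600h))·(p(x₀+2h) − p(x₀−2h)) + (1/(600h))·(p(x₀+3h) − p(x₀−3h)) − (1/2)·(p'(x₀−h) + p'(x₀+h)) − (1/20)·(p'(x₀−2h) + p'(x₀+2h)). -/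
open Polynomial

/-- The tenth-order compact FD scheme for the first derivative is exact on
polynomials of degree at most 10. -/
theorem compact_fd10_first_deriv_exact_on_polynomials (p : Polynomial ℝ)
    (hp : p.degree ≤ 10) (x₀ h : ℝ) (hh : 0 < h) :
    p.derivative.eval x₀ =
      17 / (24 * h) * (p.eval (x₀ + h) - p.eval (x₀ - h)) +
      101 / (600 * h) * (p.eval (x₀ + 2 * h) - p.eval (x₀ - 2 * h)) +
      1 / (600 * h) * (p.eval (x₀ + 3 * h) - p.eval (x₀ - 3 * h)) -
      1 / 2 * (p.derivative.eval (x₀ - h) + p.derivative.eval (x₀ + h)) -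
      1 / 20 * (p.derivative.eval (x₀ - 2 * h) + p.derivative.eval (x₀ + 2 * h)) := by
  have hh' : h ≠ 0 := ne_of_gt hh
  have hnd : p.natDegree < 11 := by
    have : p.natDegree ≤ 10 := natDegree_le_iff_degree_le.2 (by exact_mod_cast hp)
    omega
  have hnd' : p.derivative.natDegree < 11 :=
    lt_of_le_of_lt (natDegree_derivative_le p) (by omega)
  rw [eval_eq_sum_range' hnd, eval_eq_sum_range' hnd, eval_eq_sum_range' hnd,
    eval_eq_sum_range' hnd, eval_eq_sum_range' hnd, eval_eq_sum_range' hnd,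
    eval_eq_sum_range' hnd', eval_eq_sum_range' hnd', eval_eq_sum_range' hnd',
    eval_eq_sum_range' hnd', eval_eq_sum_range' hnd']
  simp only [Finset.sum_range_succ, Finset.sum_range_zero, coeff_derivative]
  rw [coeff_eq_zero_of_natDegree_lt hnd]
  push_cast
  field_simp
  ring
end

section
/- Let x₀ ∈ ℝ and let u be eight times continuously differentiable on a neighborhood of x₀. Define, for h > 0, T(h) = (12/(11h²))·(u(x₀−h) + u(x₀+h)) + (3/(44h²))·(u(x₀−2h) + u(x₀+2h)) − (51/(22h²))·u(x₀) − (2/11)·(u''(x₀−h) + u''(x₀+h)) − u''(x₀). Then T(h) = O(h⁶) as h → 0⁺. -/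
open Filter Topology Asymptotics

/-!
Expand `u` about `x₀` to order eight and `u''` to order six. The scheme is exact on
polynomials of degree at most seven, so on these Taylor polynomials the truncation error is
exactly `23/55440 · u⁽⁸⁾(x₀) · h⁶`, while the Taylor remainders are `o(h⁸)` for `u`, which the
weights `h⁻²` turn into `o(h⁶)`, and `o(h⁶)` for `u''`.
-/

theorem taylorWithinEval_of_isOpen_s13 {E : Type*} [NormedAddCommGroup E] [NormedSpace ℝ E]
    {f : ℝ → E} {s : Set ℝ} {x₀ : ℝ} (hs : IsOpen s) (hx₀ : x₀ ∈ s) (n : ℕ) (x : ℝ) :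
    taylorWithinEval f n s x₀ x =
      ∑ k ∈ Finset.range (n + 1),
        ((k.factorial : ℝ)⁻¹ * (x - x₀) ^ k) • iteratedDeriv k f x₀ := by
  rw [taylor_within_apply]
  refine Finset.sum_congr rfl fun k _ ↦ ?_
  rw [iteratedDerivWithin_of_isOpen hs hx₀]

theorem taylor_isLittleO_of_isOpen {E : Type*} [NormedAddCommGroup E] [NormedSpace ℝ E]
    {f : ℝ → E} {s : Set ℝ} {x₀ : ℝ} {n : ℕ} (hs : IsOpen s) (hconv : Convex ℝ s) (hx₀ : x₀ ∈ s)
    (hf : ContDiffOn ℝ n f s) :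
    (fun h ↦ f (x₀ + h) - taylorWithinEval f n s x₀ (x₀ + h)) =o[𝓝 0] fun h ↦ h ^ n := by
  have hshift : Tendsto (fun h : ℝ ↦ x₀ + h) (𝓝 0) (𝓝[s] x₀) := by
    rw [hs.nhdsWithin_eq hx₀]
    simpa using tendsto_const_nhds (x := x₀).add (tendsto_id (x := 𝓝 (0 : ℝ)))
  simpa [Function.comp_def] using (taylor_isLittleO hconv hx₀ hf).comp_tendsto hshift

theorem Asymptotics.IsLittleO.comp_const_mul_pow_s13 {E : Type*} [NormedAddCommGroup E]
    {g : ℝ → E} {n : ℕ} (hg : g =o[𝓝 0] fun h ↦ h ^ n) (c : ℝ) :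
    (fun h ↦ g (c * h)) =o[𝓝 0] fun h ↦ h ^ n := by
  have hc : Tendsto (fun h : ℝ ↦ c * h) (𝓝 0) (𝓝 0) := by
    simpa using (tendsto_id (x := 𝓝 (0 : ℝ))).const_mul c
  refine (hg.comp_tendsto hc).trans_isBigO ?_
  simpa only [Function.comp_def, mul_pow] using (isBigO_refl (fun h : ℝ ↦ h ^ n) _).const_mul_left _

theorem Asymptotics.IsLittleO.div_sq {g : ℝ → ℝ} {n : ℕ} (hg : g =o[𝓝 0] fun h ↦ h ^ (n + 2)) :
    (fun h ↦ g h / h ^ 2) =o[𝓝 0] fun h ↦ h ^ n := by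
  have hinv : (fun h : ℝ ↦ (h ^ 2)⁻¹ * h ^ (n + 2)) =O[𝓝 0] fun h ↦ h ^ n := by
    refine isBigO_of_le _ fun h ↦ ?_
    rcases eq_or_ne h 0 with rfl | hh
    · simp
    · rw [pow_add, mul_comm (h ^ n), inv_mul_cancel_left₀ (pow_ne_zero 2 hh)]
  simpa only [div_eq_inv_mul] using
    ((isBigO_refl (fun h : ℝ ↦ (h ^ 2)⁻¹) _).mul_isLittleO hg).trans_isBigO hinv

theorem iteratedDeriv_iteratedDeriv {𝕜 F : Type*} [NontriviallyNormedField 𝕜]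
    [NormedAddCommGroup F] [NormedSpace 𝕜 F] (m n : ℕ) (f : 𝕜 → F) :
    iteratedDeriv m (iteratedDeriv n f) = iteratedDeriv (m + n) f := by
  simp only [iteratedDeriv_eq_iterate, Function.iterate_add_apply]

/-- `w` stands for `u''`; keeping it independent of `u` makes the error linear in `(u, w)`. -/
noncomputable def compactFD6TruncationError (u w : ℝ → ℝ) (x₀ h : ℝ) : ℝ :=
  12 / (11 * h ^ 2) * (u (x₀ - h) + u (x₀ + h)) +
    3 / (44 * h ^ 2) * (u (x₀ - 2 * h) + u (x₀ + 2 * h)) -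
    51 / (22 * h ^ 2) * u x₀ -
    2 / 11 * (w (x₀ - h) + w (x₀ + h)) -
    w x₀

theorem compactFD6TruncationError_sub (u w p q : ℝ → ℝ) (x₀ h : ℝ) :
    compactFD6TruncationError u w x₀ h =
      compactFD6TruncationError (u - p) (w - q) x₀ h + compactFD6TruncationError p q x₀ h := by
  simp only [compactFD6TruncationError, Pi.sub_apply]
  ring

theorem compactFD6TruncationError_taylorPoly (d : ℕ → ℝ) (x₀ : ℝ) {h : ℝ} (hh : h ≠ 0) :
    compactFD6TruncationError
      (fun x ↦ ∑ k ∈ Finset.range 9, (k.factorial : ℝ)⁻¹ * (x - x₀) ^ k * d k)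
      (fun x ↦ ∑ k ∈ Finset.range 7, (k.factorial : ℝ)⁻¹ * (x - x₀) ^ k * d (k + 2)) x₀ h =
      23 / 55440 * d 8 * h ^ 6 := by
  simp only [compactFD6TruncationError, Finset.sum_range_succ, Finset.sum_range_zero,
    Nat.factorial]
  field_simp
  ring

theorem compactFD6TruncationError_isLittleO {R S : ℝ → ℝ} {x₀ : ℝ} (hR₀ : R x₀ = 0)
    (hS₀ : S x₀ = 0) (hR : (fun h ↦ R (x₀ + h)) =o[𝓝 0] fun h ↦ h ^ 8)
    (hS : (fun h ↦ S (x₀ + h)) =o[𝓝 0] fun h ↦ h ^ 6) :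
    compactFD6TruncationError R S x₀ =o[𝓝 0] fun h ↦ h ^ 6 := by
  have hRc := hR.comp_const_mul_pow_s13
  have hSc := hS.comp_const_mul_pow_s13
  have hsplit : compactFD6TruncationError R S x₀ = fun h ↦
      12 / 11 * ((R (x₀ + -1 * h) + R (x₀ + 1 * h)) / h ^ 2) +
        3 / 44 * ((R (x₀ + -2 * h) + R (x₀ + 2 * h)) / h ^ 2) -
        2 / 11 * (S (x₀ + -1 * h) + S (x₀ + 1 * h)) := by
    ext h
    simp only [compactFD6TruncationError, hR₀, hS₀]
    ring_nf
  rw [hsplit]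
  exact ((((hRc (-1)).add (hRc 1)).div_sq.const_mul_left _).add
    ((((hRc (-2)).add (hRc 2)).div_sq.const_mul_left _))).sub
    (((hSc (-1)).add (hSc 1)).const_mul_left _)

/-- The sixth-order compact FD scheme for the second derivative has truncation
error `O(h⁶)` as `h → 0⁺`. -/
theorem compact_fd6_second_deriv_bigO (x₀ : ℝ) (u : ℝ → ℝ)
    (s : Set ℝ) (hs : s ∈ 𝓝 x₀) (hu : ContDiffOn ℝ 8 u s) :
    (fun h : ℝ =>
        12 / (11 * h ^ 2) * (u (x₀ - h) + u (x₀ + h)) +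
        3 / (44 * h ^ 2) * (u (x₀ - 2 * h) + u (x₀ + 2 * h)) -
        51 / (22 * h ^ 2) * u x₀ -
        2 / 11 * (iteratedDeriv 2 u (x₀ - h) + iteratedDeriv 2 u (x₀ + h)) -
        iteratedDeriv 2 u x₀)
      =O[𝓝[>] 0] fun h : ℝ => h ^ 6 := by
  obtain ⟨ε, hε, hball⟩ := Metric.mem_nhds_iff.mp hs
  have ht := Metric.isOpen_ball (x := x₀) (ε := ε)
  have hx₀ := Metric.mem_ball_self (x := x₀) hε
  have hu_ball : ContDiffOn ℝ 8 u (Metric.ball x₀ ε) := hu.mono hball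
  have hu'' : ContDiffOn ℝ 6 (iteratedDeriv 2 u) (Metric.ball x₀ ε) := by
    rw [iteratedDeriv_succ, iteratedDeriv_one]
    exact (hu_ball.deriv_of_isOpen (m := 7) ht (by norm_num)).deriv_of_isOpen ht (by norm_num)
  set P := taylorWithinEval u 8 (Metric.ball x₀ ε) x₀
  set Q := taylorWithinEval (iteratedDeriv 2 u) 6 (Metric.ball x₀ ε) x₀
  have hP : P = fun x ↦ ∑ k ∈ Finset.range 9,
      (k.factorial : ℝ)⁻¹ * (x - x₀) ^ k * iteratedDeriv k u x₀ :=
    funext (taylorWithinEval_of_isOpen_s13 ht hx₀ 8)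
  have hQ : Q = fun x ↦ ∑ k ∈ Finset.range 7,
      (k.factorial : ℝ)⁻¹ * (x - x₀) ^ k * iteratedDeriv (k + 2) u x₀ := by
    simp only [Q, funext (taylorWithinEval_of_isOpen_s13 ht hx₀ 6), smul_eq_mul,
      iteratedDeriv_iteratedDeriv]
  have hrem : compactFD6TruncationError (u - P) (iteratedDeriv 2 u - Q) x₀ =o[𝓝 0] (· ^ 6) :=
    compactFD6TruncationError_isLittleO (by simp [P]) (by simp [Q])
      (taylor_isLittleO_of_isOpen ht (convex_ball x₀ ε) hx₀ hu_ball)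
      (taylor_isLittleO_of_isOpen ht (convex_ball x₀ ε) hx₀ hu'')
  have hpoly : compactFD6TruncationError P Q x₀ =O[𝓝[>] 0] (· ^ 6) := by
    refine (isBigO_const_mul_self (23 / 55440 * iteratedDeriv 8 u x₀) _ _).congr' ?_ .rfl
    filter_upwards [self_mem_nhdsWithin] with h hh
    rw [hP, hQ, compactFD6TruncationError_taylorPoly _ x₀ (ne_of_gt hh)]
  change compactFD6TruncationError u (iteratedDeriv 2 u) x₀ =O[𝓝[>] 0] (· ^ 6)
  simpa only [← compactFD6TruncationError_sub] using
    (hrem.isBigO.mono nhdsWithin_le_nhds).add hpoly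
end

section
/- For every real polynomial p of degree at most 9, every x₀ ∈ ℝ and every h > 0, p''(x₀) = (320/(393h²))·(p(x₀−h) + p(x₀+h)) + (155/(786h²))·(p(x₀−2h) + p(x₀+2h)) − (265/(131h²))·p(x₀) − (344/1179)·(p''(x₀−h) + p''(x₀+h)) − (23/2358)·(p''(x₀−2h) + p''(x₀+2h)). -/
open Polynomial

/-- The eighth-order compact FD scheme for the second derivative is exact on
polynomials of degree at most 9. -/
theorem compact_fd8_second_deriv_exact_on_polynomials (p : Polynomial ℝ)
    (hp : p.degree ≤ 9) (x₀ h : ℝ) (hh : 0 < h) :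
    p.derivative.derivative.eval x₀ =
      320 / (393 * h ^ 2) * (p.eval (x₀ - h) + p.eval (x₀ + h)) +
      155 / (786 * h ^ 2) * (p.eval (x₀ - 2 * h) + p.eval (x₀ + 2 * h)) -
      265 / (131 * h ^ 2) * p.eval x₀ -
      344 / 1179 * (p.derivative.derivative.eval (x₀ - h) +
        p.derivative.derivative.eval (x₀ + h)) -
      23 / 2358 * (p.derivative.derivative.eval (x₀ - 2 * h) +
        p.derivative.derivative.eval (x₀ + 2 * h)) := by
  have h9 : p.natDegree < 10 :=
    Nat.lt_succ_of_le (natDegree_le_iff_degree_le.mpr (by exact_mod_cast hp))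
  rw [p.as_sum_range' 10 h9]
  simp only [derivative_sum, derivative_monomial, eval_finset_sum, eval_monomial,
    Finset.sum_range_succ, Finset.sum_range_zero]
  norm_num
  field_simp
  ring
end

section
/- For every real polynomial p(x, y) in two variables of total degree at most 7, every (x₀, y₀) ∈ ℝ² and every h > 0, Δp(x₀,y₀) = −(105/(23h²))·p(x₀,y₀) + (12/(23h²))·(p(x₀+h,y₀) + p(x₀,y₀+h) + p(x₀−h,y₀) + p(x₀,y₀−h) + p(x₀+h,y₀+h) + p(x₀−h,y₀+h) + p(x₀−h,y₀−h) + p(x₀+h,y₀−h)) + (9/(92h²))·(p(x₀+2h,y₀) + p(x₀,y₀+2h) + p(x₀−2h,y₀) + p(x₀,y₀−2h)) − (5/23)·(Δp(x₀+h,y₀) + Δp(x₀,y₀+h) + Δp(x₀−h,y₀) + Δp(x₀,y₀−h)) − (1/46)·(Δp(x₀+h,y₀+h) + Δp(x₀−h,y₀+h) + Δp(x₀−h,y₀−h) + Δp(x₀+h,y₀−h)), where Δp = p_xx + p_yy. -/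
open MvPolynomial

/-- The Laplacian `Δp = p_xx + p_yy` of a real polynomial in two variables. -/
noncomputable def polyLaplacian (p : MvPolynomial (Fin 2) ℝ) : MvPolynomial (Fin 2) ℝ :=
  pderiv 0 (pderiv 0 p) + pderiv 1 (pderiv 1 p)

lemma eval_monomial_two (m : Fin 2 →₀ ℕ) (c a b : ℝ) :
    eval ![a, b] (monomial m c) = c * a ^ m 0 * b ^ m 1 := by
  simp [eval_monomial, Finsupp.prod_pow, Fin.prod_univ_two, mul_assoc]

lemma eval_lap_monomial (m : Fin 2 →₀ ℕ) (c a b : ℝ) :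
    eval ![a, b] (polyLaplacian (monomial m c)) =
      c * (m 0) * ((m 0 - 1 : ℕ)) * a ^ (m 0 - 2) * b ^ m 1 +
      c * (m 1) * ((m 1 - 1 : ℕ)) * a ^ m 0 * b ^ (m 1 - 2) := by
  rw [polyLaplacian, map_add, pderiv_monomial, pderiv_monomial, pderiv_monomial,
    pderiv_monomial, eval_monomial_two, eval_monomial_two]
  simp [Finsupp.tsub_apply]
  ring_nf
  rw [Nat.sub_sub, Nat.sub_sub]
  ring

set_option maxHeartbeats 0 in
lemma compact_fd6_key (i j : ℕ) (hij : i + j ≤ 7) (c x₀ y₀ h : ℝ) (hh : h ≠ 0) :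
    (c * i * ((i - 1 : ℕ)) * x₀ ^ (i - 2) * y₀ ^ j + c * j * ((j - 1 : ℕ)) * x₀ ^ i * y₀ ^ (j - 2)) =
      -(105 / (23 * h ^ 2)) * (c * x₀ ^ i * y₀ ^ j) +
      12 / (23 * h ^ 2) *
        (c * (x₀+h) ^ i * y₀ ^ j + c * x₀ ^ i * (y₀+h) ^ j +
          c * (x₀-h) ^ i * y₀ ^ j + c * x₀ ^ i * (y₀-h) ^ j +
          c * (x₀+h) ^ i * (y₀+h) ^ j + c * (x₀-h) ^ i * (y₀+h) ^ j +
          c * (x₀-h) ^ i * (y₀-h) ^ j + c * (x₀+h) ^ i * (y₀-h) ^ j) +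
      9 / (92 * h ^ 2) *
        (c * (x₀+2*h) ^ i * y₀ ^ j + c * x₀ ^ i * (y₀+2*h) ^ j +
          c * (x₀-2*h) ^ i * y₀ ^ j + c * x₀ ^ i * (y₀-2*h) ^ j) -
      5 / 23 *
        ((c * i * ((i - 1 : ℕ)) * (x₀+h) ^ (i - 2) * y₀ ^ j + c * j * ((j - 1 : ℕ)) * (x₀+h) ^ i * y₀ ^ (j - 2)) +
         (c * i * ((i - 1 : ℕ)) * x₀ ^ (i - 2) * (y₀+h) ^ j + c * j * ((j - 1 : ℕ)) * x₀ ^ i * (y₀+h) ^ (j - 2)) +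
         (c * i * ((i - 1 : ℕ)) * (x₀-h) ^ (i - 2) * y₀ ^ j + c * j * ((j - 1 : ℕ)) * (x₀-h) ^ i * y₀ ^ (j - 2)) +
         (c * i * ((i - 1 : ℕ)) * x₀ ^ (i - 2) * (y₀-h) ^ j + c * j * ((j - 1 : ℕ)) * x₀ ^ i * (y₀-h) ^ (j - 2))) -
      1 / 46 *
        ((c * i * ((i - 1 : ℕ)) * (x₀+h) ^ (i - 2) * (y₀+h) ^ j + c * j * ((j - 1 : ℕ)) * (x₀+h) ^ i * (y₀+h) ^ (j - 2)) +
         (c * i * ((i - 1 : ℕ)) * (x₀-h) ^ (i - 2) * (y₀+h) ^ j + c * j * ((j - 1 : ℕ)) * (x₀-h) ^ i * (y₀+h) ^ (j - 2)) +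
         (c * i * ((i - 1 : ℕ)) * (x₀-h) ^ (i - 2) * (y₀-h) ^ j + c * j * ((j - 1 : ℕ)) * (x₀-h) ^ i * (y₀-h) ^ (j - 2)) +
         (c * i * ((i - 1 : ℕ)) * (x₀+h) ^ (i - 2) * (y₀-h) ^ j + c * j * ((j - 1 : ℕ)) * (x₀+h) ^ i * (y₀-h) ^ (j - 2))) := by
  have hi : i ≤ 7 := le_trans (Nat.le_add_right _ _) hij
  have hj : j ≤ 7 := le_trans (Nat.le_add_left _ _) hij
  interval_cases i <;> interval_cases j <;> norm_num <;> (try omega) <;> (field_simp; ring)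

noncomputable def Dhom (x₀ y₀ h : ℝ) : MvPolynomial (Fin 2) ℝ →+ ℝ where
  toFun p :=
    eval ![x₀, y₀] (polyLaplacian p) -
      (-(105 / (23 * h ^ 2)) * eval ![x₀, y₀] p +
      12 / (23 * h ^ 2) *
        (eval ![x₀ + h, y₀] p + eval ![x₀, y₀ + h] p +
          eval ![x₀ - h, y₀] p + eval ![x₀, y₀ - h] p +
          eval ![x₀ + h, y₀ + h] p + eval ![x₀ - h, y₀ + h] p +
          eval ![x₀ - h, y₀ - h] p + eval ![x₀ + h, y₀ - h] p) +
      9 / (92 * h ^ 2) *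
        (eval ![x₀ + 2 * h, y₀] p + eval ![x₀, y₀ + 2 * h] p +
          eval ![x₀ - 2 * h, y₀] p + eval ![x₀, y₀ - 2 * h] p) -
      5 / 23 *
        (eval ![x₀ + h, y₀] (polyLaplacian p) + eval ![x₀, y₀ + h] (polyLaplacian p) +
          eval ![x₀ - h, y₀] (polyLaplacian p) + eval ![x₀, y₀ - h] (polyLaplacian p)) -
      1 / 46 *
        (eval ![x₀ + h, y₀ + h] (polyLaplacian p) + eval ![x₀ - h, y₀ + h] (polyLaplacian p) +
          eval ![x₀ - h, y₀ - h] (polyLaplacian p) + eval ![x₀ + h, y₀ - h] (polyLaplacian p)))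
  map_zero' := by simp [polyLaplacian]
  map_add' p q := by
    simp only [polyLaplacian, map_add]
    ring

lemma Dhom_monomial (x₀ y₀ h : ℝ) (hh : h ≠ 0) (v : Fin 2 →₀ ℕ) (c : ℝ)
    (hv : v 0 + v 1 ≤ 7) : Dhom x₀ y₀ h (monomial v c) = 0 := by
  simp only [Dhom, AddMonoidHom.coe_mk, ZeroHom.coe_mk, eval_monomial_two, eval_lap_monomial]
  rw [sub_eq_zero]
  exact compact_fd6_key (v 0) (v 1) hv c x₀ y₀ h hh

/-- The sixth-order compact FD scheme for the 2D Laplacian is exact on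
polynomials of total degree at most 7. -/
theorem compact_fd6_laplacian_exact_on_polynomials (p : MvPolynomial (Fin 2) ℝ)
    (hp : p.totalDegree ≤ 7) (x₀ y₀ h : ℝ) (hh : 0 < h) :
    eval ![x₀, y₀] (polyLaplacian p) =
      -(105 / (23 * h ^ 2)) * eval ![x₀, y₀] p +
      12 / (23 * h ^ 2) *
        (eval ![x₀ + h, y₀] p + eval ![x₀, y₀ + h] p +
          eval ![x₀ - h, y₀] p + eval ![x₀, y₀ - h] p +
          eval ![x₀ + h, y₀ + h] p + eval ![x₀ - h, y₀ + h] p +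
          eval ![x₀ - h, y₀ - h] p + eval ![x₀ + h, y₀ - h] p) +
      9 / (92 * h ^ 2) *
        (eval ![x₀ + 2 * h, y₀] p + eval ![x₀, y₀ + 2 * h] p +
          eval ![x₀ - 2 * h, y₀] p + eval ![x₀, y₀ - 2 * h] p) -
      5 / 23 *
        (eval ![x₀ + h, y₀] (polyLaplacian p) + eval ![x₀, y₀ + h] (polyLaplacian p) +
          eval ![x₀ - h, y₀] (polyLaplacian p) + eval ![x₀, y₀ - h] (polyLaplacian p)) -
      1 / 46 *
        (eval ![x₀ + h, y₀ + h] (polyLaplacian p) + eval ![x₀ - h, y₀ + h] (polyLaplacian p) +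
          eval ![x₀ - h, y₀ - h] (polyLaplacian p) + eval ![x₀ + h, y₀ - h] (polyLaplacian p)) := by
  have hD : Dhom x₀ y₀ h p = 0 := by
    conv_lhs => rw [p.as_sum]
    rw [map_sum]
    refine Finset.sum_eq_zero fun v hv => ?_
    refine Dhom_monomial x₀ y₀ h hh.ne' v _ ?_
    have h1 : (v.sum fun _ e => e) ≤ 7 := le_trans (MvPolynomial.le_totalDegree hv) hp
    rwa [Finsupp.sum_fintype _ _ (fun _ => rfl), Fin.sum_univ_two] at h1
  simpa only [Dhom, AddMonoidHom.coe_mk, ZeroHom.coe_mk] using sub_eq_zero.mp hD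
end
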